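/- Let G be a finite simple graph with vertex clique-partition π = {W_1,…,W_d}, and let G^π be the clique-whiskered graph with added vertex set W. Then every maximal independent vertex set of G^π has cardinality exactly d; that is, the graph G^π is unmixed (the independence complex Ind G^π is pure of dimension d − 1). -/

import Mathlib

namespace Paper

variable {V : Type*}

/-- `S` is an independent vertex set of the graph `H` (equivalently, of any induced
subgraph of `H` containing `S`): its vertices are pairwise non-adjacent. -/
def IndepOn (H : SimpleGraph V) (S : Set V) : Prop :=
  ∀ x ∈ S, ∀ y ∈ S, ¬ H.Adj x y

/-- `S` is a maximal independent vertex set of the graph `H`. -/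
def MaxIndep (H : SimpleGraph V) (S : Set V) : Prop :=
  IndepOn H S ∧ ∀ T : Set V, IndepOn H T → S ⊆ T → T = S

/-- The data exhibiting the graph `H` (on its full vertex type) as the
clique-whiskered graph `G^π` over the base graph `G` (the induced subgraph of `H` on
`Vg`), built from a vertex clique-partition `π = {W_1, …, W_d}` of `G` by adding `d`
new vertices `s_1', …, s_d'`, where `s_i'` is adjacent exactly to the vertices of
`W i`.  The set of added vertices is `W = Set.range sV`. -/
structure CliqueWhiskered (H : SimpleGraph V) (d : ℕ) where
  /-- the vertex set of the base graph `G`; the edges of `G` are the edges of `H`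
  between vertices of `Vg`, i.e. `G` is the induced subgraph of `H` on `Vg`. -/
  Vg : Set V
  /-- the vertex clique-partition `π = {W_1, …, W_d}` of `G` -/
  W : Fin d → Set V
  /-- the added whisker vertices `s_1', …, s_d'` -/
  sV : Fin d → V
  W_ne : ∀ i, (W i).Nonempty
  W_sub : ∀ i, W i ⊆ Vg
  W_disj : ∀ i j, i ≠ j → Disjoint (W i) (W j)
  W_cover : Vg ⊆ ⋃ i, W i
  W_clique : ∀ i, ∀ x ∈ W i, ∀ y ∈ W i, x ≠ y → H.Adj x y
  s_notin : ∀ i, sV i ∉ Vg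
  s_inj : Function.Injective sV
  /-- the vertex set of `G^π` is `V(G)` together with the new vertices -/
  total : Set.univ = Vg ∪ Set.range sV
  /-- `s_i'` is adjacent exactly to the vertices of `W i` -/
  s_adj : ∀ i, ∀ w : V, H.Adj (sV i) w ↔ w ∈ W i

/-!
Each whisker `s_i'` together with its clique `W_i` forms a clique `B_i = W_i ∪ {s_i'}`, and
the blocks `B_1, …, B_d` partition the vertex set. An independent set meets every clique at
most once, and a maximal independent set `F` meets every `B_i`: otherwise `s_i'`, whose
neighbours all lie in `B_i`, could be added to `F`. Hence `F` picks exactly one vertex from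
each block, so `|F| = d`.
-/

open Function

section Graph

variable {H : SimpleGraph V}

theorem IndepOn.subsingleton_inter_of_isClique {S C : Set V} (hS : IndepOn H S)
    (hC : H.IsClique C) : (S ∩ C).Subsingleton := by
  intro x hx y hy
  by_contra hxy
  exact hS x hx.1 y hy.1 (hC hx.2 hy.2 hxy)

theorem IndepOn.insert {S : Set V} {v : V} (hS : IndepOn H S)
    (hv : ∀ w ∈ S, ¬ H.Adj v w) : IndepOn H (insert v S) := by
  rintro x (rfl | hx) y (rfl | hy) hxy
  · exact H.irrefl hxy
  · exact hv y hy hxy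
  · exact hv x hx hxy.symm
  · exact hS x hx y hy hxy

theorem MaxIndep.inter_nonempty {F C : Set V} {v : V} (hF : MaxIndep H F) (hv : v ∈ C)
    (hN : ∀ w, H.Adj v w → w ∈ C) : (F ∩ C).Nonempty := by
  by_contra hFC
  rw [Set.not_nonempty_iff_eq_empty, Set.eq_empty_iff_forall_notMem] at hFC
  have hins := hF.2 _ (hF.1.insert fun w hw hvw => hFC w ⟨hw, hN w hvw⟩) (Set.subset_insert v F)
  exact hFC v ⟨hins ▸ Set.mem_insert v F, hv⟩

theorem MaxIndep.existsUnique_mem_inter {F C : Set V} {v : V} (hF : MaxIndep H F)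
    (hC : H.IsClique C) (hv : v ∈ C) (hN : ∀ w, H.Adj v w → w ∈ C) :
    ∃! x, x ∈ F ∩ C :=
  let ⟨x, hx⟩ := hF.inter_nonempty hv hN
  ⟨x, hx, fun _ hy => hF.1.subsingleton_inter_of_isClique hC hy hx⟩

end Graph

theorem ncard_eq_of_existsUnique_mem_inter {ι : Type*} {B : ι → Set V} {S : Set V}
    (hdisj : Pairwise (Disjoint on B)) (hcover : S ⊆ ⋃ i, B i)
    (hS : ∀ i, ∃! x, x ∈ S ∩ B i) : S.ncard = Nat.card ι := by
  choose g hg hg_unique using hS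
  have hg_inj : Injective g := fun i j hij => by
    by_contra hne
    exact Set.disjoint_left.mp (hdisj hne) (hg i).2 (hij ▸ (hg j).2)
  have hrange : Set.range g = S := by
    refine Set.Subset.antisymm (Set.range_subset_iff.mpr fun i => (hg i).1) fun x hx => ?_
    obtain ⟨i, hi⟩ := Set.mem_iUnion.mp (hcover hx)
    exact ⟨i, (hg_unique i x ⟨hx, hi⟩).symm⟩
  rw [← hrange, Set.ncard_range_of_injective hg_inj]

namespace CliqueWhiskered

variable {H : SimpleGraph V} {d : ℕ} (M : CliqueWhiskered H d)

def block (i : Fin d) : Set V := insert (M.sV i) (M.W i)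

theorem isClique_block (i : Fin d) : H.IsClique (M.block i) :=
  SimpleGraph.isClique_insert.mpr ⟨fun x hx y hy hxy => M.W_clique i x hx y hy hxy,
    fun w hw _ => (M.s_adj i w).mpr hw⟩

theorem mem_block_of_adj {i : Fin d} {w : V} (hw : H.Adj (M.sV i) w) : w ∈ M.block i :=
  Set.mem_insert_of_mem _ ((M.s_adj i w).mp hw)

theorem pairwise_disjoint_block : Pairwise (Disjoint on M.block) := by
  intro i j hij
  refine Set.disjoint_left.mpr ?_
  rintro v (rfl | hvi) (hvj | hvj)
  · exact hij (M.s_inj hvj)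
  · exact M.s_notin i (M.W_sub j hvj)
  · exact M.s_notin j (hvj ▸ M.W_sub i hvi)
  · exact Set.disjoint_left.mp (M.W_disj i j hij) hvi hvj

theorem iUnion_block : ⋃ i, M.block i = Set.univ := by
  refine Set.eq_univ_of_univ_subset (M.total ▸ Set.union_subset (fun v hv => ?_) ?_)
  · obtain ⟨i, hi⟩ := Set.mem_iUnion.mp (M.W_cover hv)
    exact Set.mem_iUnion_of_mem i (Set.mem_insert_of_mem _ hi)
  · rintro _ ⟨i, rfl⟩
    exact Set.mem_iUnion_of_mem i (Set.mem_insert _ _)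

end CliqueWhiskered

theorem cliqueWhiskered_unmixed_general
    (H : SimpleGraph V) (d : ℕ) (M : CliqueWhiskered H d)
    (F : Set V) (hF : MaxIndep H F) :
    F.ncard = d := by
  have hblock : ∀ i, ∃! x, x ∈ F ∩ M.block i := fun i =>
    hF.existsUnique_mem_inter (M.isClique_block i) (Set.mem_insert _ _)
      fun _ => M.mem_block_of_adj
  rw [ncard_eq_of_existsUnique_mem_inter M.pairwise_disjoint_block
    (M.iUnion_block ▸ Set.subset_univ F) hblock, Nat.card_fin]

/-- **Theorem.** Every maximal independent vertex set of the clique-whiskered graph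
`G^π` has cardinality exactly `d`; that is, `G^π` is unmixed (the independence complex
`Ind G^π` is pure of dimension `d - 1`). -/
theorem cliqueWhiskered_unmixed [Fintype V]
    (H : SimpleGraph V) (d : ℕ) (M : CliqueWhiskered H d)
    (F : Set V) (hF : MaxIndep H F) :
    F.ncard = d :=
  cliqueWhiskered_unmixed_general H d M F hF

end Paper
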